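/- For every real number x there exist real numbers u and v such that x = u + v and every NICF digit a_i of u with i ≥ 1 satisfies |a_i| ≤ 5, and every NICF digit a_i of v with i ≥ 1 satisfies |a_i| ≤ 5 (that is, ℝ = NICF_5 + NICF_5). -/

import Mathlib

open Filter Pointwise

/-- NICF iterates: `x₀ = x`, `x_{i+1} = 1/(x_i - ⌊x_i⌉)`, with `⌊t⌉ = round t = ⌊t + 1/2⌋`. -/
noncomputable def nicfX (x : ℝ) : ℕ → ℝ
  | 0 => x
  | n + 1 => 1 / (nicfX x n - round (nicfX x n))

/-- The `i`-th NICF digit of `x`. -/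
noncomputable def nicfDigit (x : ℝ) (i : ℕ) : ℤ := round (nicfX x i)

/-- The `i`-th NICF digit is genuinely defined: the algorithm has not terminated before
step `i` (i.e. `x_m ≠ a_m` for all `m < i`). -/
def nicfDefined (x : ℝ) (i : ℕ) : Prop :=
  ∀ m, m < i → nicfX x m ≠ (nicfDigit x m : ℝ)

/-- `NICFset r`: the reals all of whose NICF digits `a_i` with `i ≥ 1` satisfy `|a_i| ≤ r`. -/
def NICFset (r : ℤ) : Set ℝ :=
  {x | ∀ i : ℕ, 1 ≤ i → nicfDefined x i → |nicfDigit x i| ≤ r}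

/-!
Write `x = k + s` with `k ∈ ℤ` and `s ∈ [2α₀, 2θ]`, an interval of length `2√21 - 8 > 1`. Let `C` be
the set of regular continued fractions `t = [0; a₁, a₂, …]` with digits in `{1, …, 4}` and no `1`
followed by a `4`. Running the NICF algorithm on `k + t`, every remainder is `±(t' - ⌊t'⌉)` with
`t' ∈ C`, and inverting it gives `±(a + t'')` with `a ≤ 4` and `t'' ∈ C`: if `t' > 1/2` its first
two digits are `1, a'` and `1/(1 - t') = 1 + a' + t''`, where `a' ≤ 3`. So all NICF digits of
`k + t` after the first have absolute value at most `5`.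

It remains to show `C + C ⊇ [2α₀, 2θ]`, by Newhouse's gap lemma. `C` is the limit set of a binary
tree of intervals whose gaps are never longer than the adjacent children, and never longer than the
gap of the parent. Every interval of the tree is the image of one of five model configurations under
a map `z ↦ (n₁ z + n₀)/(d₁ z + d₀)` given by the continuants of a word, which changes lengths by the
factor `1 / (d₀² (1 + r z₁)(1 + r z₂))` with `r = d₁/d₀ ∈ [0, 1]`; so it suffices to compare the
lengths in the five models, uniformly in `r`.
-/

namespace NICF

open Set

/-! ### The gap lemma -/

/-- A binary tree of intervals `[lo X, hi X]` in which removing the gap `(gapLo X, gapHi X)`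
leaves the intervals of the two children, as in Newhouse's gap lemma: no gap is longer than the
adjacent children or than the gap of the parent. -/
structure ThickTree (ι : Type*) where
  lo : ι → ℝ
  hi : ι → ℝ
  gapLo : ι → ℝ
  gapHi : ι → ℝ
  rank : ι → ℕ
  child : ι → Bool → ι
  gapLo_lt_gapHi (X : ι) : gapLo X < gapHi X
  exists_child_eq (X : ι) : ∃ i, lo (child X i) = lo X ∧ hi (child X i) = gapLo X ∧
    lo (child X !i) = gapHi X ∧ hi (child X !i) = hi X
  gap_le_length_child (X : ι) (i : Bool) : gapHi X - gapLo X ≤ hi (child X i) - lo (child X i)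
  gap_child_le (X : ι) (i : Bool) : gapHi (child X i) - gapLo (child X i) ≤ gapHi X - gapLo X
  rank_lt_child (X : ι) (i : Bool) : rank X < rank (child X i)
  exists_length_lt (ε : ℝ) (hε : 0 < ε) : ∃ N, ∀ X, N ≤ rank X → hi X - lo X < ε

namespace ThickTree

variable {ι κ : Type*} (T : ThickTree ι) (U : ThickTree κ)

def gap (X : ι) : ℝ := T.gapHi X - T.gapLo X

def length (X : ι) : ℝ := T.hi X - T.lo X

lemma gap_pos (X : ι) : 0 < T.gap X := sub_pos.2 (T.gapLo_lt_gapHi X)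

lemma gap_le_length (X : ι) : T.gap X ≤ T.length X := by
  obtain ⟨i, h₁, h₂, h₃, h₄⟩ := T.exists_child_eq X
  have hl := T.gap_le_length_child X i
  have hr := T.gap_le_length_child X !i
  rw [h₁, h₂] at hl
  rw [h₃, h₄] at hr
  have := T.gap_pos X
  unfold gap length at *
  linarith

lemma lo_le_hi (X : ι) : T.lo X ≤ T.hi X :=
  sub_nonneg.1 ((T.gap_pos X).le.trans (T.gap_le_length X))

lemma exists_left (X : ι) : ∃ P, T.lo P = T.lo X ∧ T.hi P = T.gapLo X ∧ T.gap P ≤ T.gap X ∧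
    T.gap X ≤ T.length P ∧ T.rank X < T.rank P := by
  obtain ⟨i, h₁, h₂, -, -⟩ := T.exists_child_eq X
  exact ⟨T.child X i, h₁, h₂, T.gap_child_le X i, T.gap_le_length_child X i, T.rank_lt_child X i⟩

lemma exists_right (X : ι) : ∃ Q, T.lo Q = T.gapHi X ∧ T.hi Q = T.hi X ∧ T.gap Q ≤ T.gap X ∧
    T.gap X ≤ T.length Q ∧ T.rank X < T.rank Q := by
  obtain ⟨i, -, -, h₁, h₂⟩ := T.exists_child_eq X
  exact ⟨T.child X !i, h₁, h₂, T.gap_child_le X _, T.gap_le_length_child X _, T.rank_lt_child X _⟩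

def Linked (s : ℝ) (X : ι) (Y : κ) : Prop :=
  T.lo X + U.lo Y ≤ s ∧ s ≤ T.hi X + U.hi Y ∧ T.gap X ≤ U.length Y ∧ U.gap Y ≤ T.length X

variable {T U} {s : ℝ}

lemma Linked.symm {X : ι} {Y : κ} (h : T.Linked U s X Y) : U.Linked T s Y X := by
  obtain ⟨h₁, h₂, h₃, h₄⟩ := h
  exact ⟨by linarith, by linarith, h₄, h₃⟩

/-- Splitting the piece with the larger gap keeps the pair linked. -/
lemma Linked.exists_child {X : ι} {Y : κ} (h : T.Linked U s X Y) (hgap : U.gap Y ≤ T.gap X) :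
    ∃ X', T.Linked U s X' Y ∧ T.rank X < T.rank X' := by
  obtain ⟨h₁, h₂, h₃, h₄⟩ := h
  by_cases hs : s ≤ T.gapLo X + U.hi Y
  · obtain ⟨P, hlo, hhi, hgapP, hlenP, hrank⟩ := T.exists_left X
    exact ⟨P, ⟨hlo ▸ h₁, hhi ▸ hs, hgapP.trans h₃, hgap.trans hlenP⟩, hrank⟩
  · obtain ⟨Q, hlo, hhi, hgapQ, hlenQ, hrank⟩ := T.exists_right X
    have hs' : T.gapHi X + U.lo Y ≤ s := by
      unfold gap length at h₃; linarith
    exact ⟨Q, ⟨hlo ▸ hs', hhi ▸ h₂, hgapQ.trans h₃, hgap.trans hlenQ⟩, hrank⟩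

lemma Linked.exists_gap_le {X : ι} {Y : κ} (h : T.Linked U s X Y) :
    ∃ Y', T.Linked U s X Y' ∧ U.rank Y ≤ U.rank Y' ∧ U.gap Y' ≤ T.gap X := by
  obtain ⟨N, hN⟩ := U.exists_length_lt _ (T.gap_pos X)
  suffices ∀ k Y, N ≤ U.rank Y + k → T.Linked U s X Y →
      ∃ Y', T.Linked U s X Y' ∧ U.rank Y ≤ U.rank Y' ∧ U.gap Y' ≤ T.gap X from
    this N Y (by omega) h
  intro k
  induction k with
  | zero => exact fun Y hY h ↦ ⟨Y, h, le_rfl, (U.gap_le_length Y).trans (hN Y hY).le⟩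
  | succ k ih =>
    intro Y hY h
    by_cases hgap : U.gap Y ≤ T.gap X
    · exact ⟨Y, h, le_rfl, hgap⟩
    obtain ⟨Y₁, h₁, hrank₁⟩ := h.symm.exists_child (not_le.1 hgap).le
    obtain ⟨Y₂, h₂, hrank₂, hgap₂⟩ := ih Y₁ (by omega) h₁.symm
    exact ⟨Y₂, h₂, hrank₁.le.trans hrank₂, hgap₂⟩

lemma Linked.exists_rank_ge {X : ι} {Y : κ} (h : T.Linked U s X Y) (N : ℕ) :
    ∃ X' Y', T.Linked U s X' Y' ∧ N ≤ T.rank X' ∧ U.rank Y ≤ U.rank Y' := by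
  suffices ∀ k X Y, N ≤ T.rank X + k → T.Linked U s X Y →
      ∃ X' Y', T.Linked U s X' Y' ∧ N ≤ T.rank X' ∧ U.rank Y ≤ U.rank Y' from
    this N X Y (by omega) h
  intro k
  induction k with
  | zero => exact fun X Y hX h ↦ ⟨X, Y, h, hX, le_rfl⟩
  | succ k ih =>
    intro X Y hX h
    obtain ⟨Y₁, h₁, hrank₁, hgap₁⟩ := h.exists_gap_le
    obtain ⟨X₂, h₂, hrank₂⟩ := h₁.exists_child hgap₁
    obtain ⟨X₃, Y₃, h₃, hX₃, hY₃⟩ := ih X₂ Y₁ (by omega) h₂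
    exact ⟨X₃, Y₃, h₃, hX₃, hrank₁.trans hY₃⟩

/-- Newhouse's gap lemma. -/
theorem Linked.exists_ranks_ge {X : ι} {Y : κ} (h : T.Linked U s X Y) (N : ℕ) :
    ∃ X' Y', T.Linked U s X' Y' ∧ N ≤ T.rank X' ∧ N ≤ U.rank Y' := by
  obtain ⟨X₁, Y₁, h₁, hX₁, -⟩ := h.exists_rank_ge N
  obtain ⟨Y₂, X₂, h₂, hY₂, hX₂⟩ := h₁.symm.exists_rank_ge N
  exact ⟨X₂, Y₂, h₂.symm, hX₁.trans hX₂, hY₂⟩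

end ThickTree

lemma mem_Icc_add_Icc {a b c d s : ℝ} (hab : a ≤ b) (hcd : c ≤ d) (hs : s ∈ Icc (a + c) (b + d)) :
    s ∈ Icc a b + Icc c d := by
  refine Set.mem_add.2 ⟨max a (s - d), ⟨le_max_left _ _, max_le hab (by linarith [hs.2])⟩,
    s - max a (s - d), ⟨?_, ?_⟩, by ring⟩
  · linarith [max_le (show a ≤ s - c by linarith [hs.1]) (show s - d ≤ s - c by linarith)]
  · linarith [le_max_right a (s - d)]

lemma mem_iInter_add_iInter {M : Type*} [TopologicalSpace M] [T2Space M] [Add M] [ContinuousAdd M]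
    {K L : ℕ → Set M} (hK : Antitone K) (hL : Antitone L) (hKc : ∀ n, IsCompact (K n))
    (hLc : ∀ n, IsCompact (L n)) {s : M} (hs : ∀ n, s ∈ K n + L n) :
    s ∈ (⋂ n, K n) + (⋂ n, L n) := by
  set F : ℕ → Set (M × M) := fun n ↦ K n ×ˢ L n ∩ (fun p ↦ p.1 + p.2) ⁻¹' {s}
  have hFc : ∀ n, IsCompact (F n) := fun n ↦
    ((hKc n).prod (hLc n)).inter_right (isClosed_singleton.preimage continuous_add)
  obtain ⟨p, hp⟩ := IsCompact.nonempty_iInter_of_sequence_nonempty_isCompact_isClosed F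
    (fun n ↦ inter_subset_inter_left _ (prod_mono (hK n.le_succ) (hL n.le_succ)))
    (fun n ↦ by obtain ⟨x, hx, y, hy, hxy⟩ := hs n; exact ⟨(x, y), ⟨hx, hy⟩, hxy⟩)
    (hFc 0) (fun n ↦ (hFc n).isClosed)
  simp only [mem_iInter, F, mem_inter_iff, mem_prod, mem_preimage, mem_singleton_iff] at hp
  exact ⟨p.1, mem_iInter.2 fun n ↦ (hp n).1.1, p.2, mem_iInter.2 fun n ↦ (hp n).1.2, (hp 0).2⟩

lemma min_max_eq_of_le {a b c d : ℝ} (hab : a ≤ b) (hbc : b ≤ c) (hcd : c ≤ d) :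
    min a b = min a d ∧ max a b = min b c ∧ min c d = max b c ∧ max c d = max a d := by
  simp only [min_def, max_def]
  refine ⟨?_, ?_, ?_, ?_⟩ <;> split_ifs <;> linarith

lemma min_max_eq_of_ge {a b c d : ℝ} (hab : b ≤ a) (hbc : c ≤ b) (hcd : d ≤ c) :
    min c d = min a d ∧ max c d = min b c ∧ min a b = max b c ∧ max a b = max a d := by
  simp only [min_def, max_def]
  refine ⟨?_, ?_, ?_, ?_⟩ <;> split_ifs <;> linarith

/-! ### Continued fraction maps and their distortion -/

noncomputable def cfStep (a : ℕ) (t : ℝ) : ℝ := 1 / (a + t)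

/-- `cfMap [a₁, …, aₙ] z = 1/(a₁ + 1/(a₂ + ⋯ + 1/(aₙ + z)))`. -/
noncomputable def cfMap : List ℕ → ℝ → ℝ
  | [], z => z
  | a :: w, z => cfStep a (cfMap w z)

lemma cfMap_append (w : List ℕ) (a : ℕ) (z : ℝ) : cfMap (w ++ [a]) z = cfMap w (cfStep a z) := by
  induction w with
  | nil => rfl
  | cons b w ih => simp only [List.cons_append, cfMap, ih]

lemma cfStep_pos {a : ℕ} (ha : 0 < a) {t : ℝ} (ht : 0 ≤ t) : 0 < cfStep a t := by
  unfold cfStep; have : (1 : ℝ) ≤ a := by exact_mod_cast ha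
  positivity

lemma cfStep_le_cfStep {a b : ℕ} (ha : 0 < a) (hab : a ≤ b) {s t : ℝ} (hs : 0 ≤ s) (hst : s ≤ t) :
    cfStep b t ≤ cfStep a s := by
  have : (a : ℝ) ≤ b := by exact_mod_cast hab
  have : (1 : ℝ) ≤ a := by exact_mod_cast ha
  exact one_div_le_one_div_of_le (by linarith) (by linarith)

/-- `cfMap w` maps `[z₁, z₂]` onto an interval of length `imageLength r z₁ z₂ / d₀²`, with
`r = d₁ / d₀ ∈ [0, 1]` (see `abs_cfMap_sub_cfMap`). -/
noncomputable def imageLength (r z₁ z₂ : ℝ) : ℝ := (z₂ - z₁) / ((1 + r * z₁) * (1 + r * z₂))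

section imageLength

variable {r z₁ z₂ z₃ z₄ : ℝ}

lemma imageLength_pos (hr : 0 ≤ r) (hz₁ : 0 ≤ z₁) (h : z₁ < z₂) : 0 < imageLength r z₁ z₂ := by
  unfold imageLength
  have : 0 ≤ z₂ := by linarith
  exact div_pos (by linarith) (by positivity)

lemma imageLength_le (hr : 0 ≤ r) (hz₁ : 0 ≤ z₁) (h : z₁ ≤ z₂) : imageLength r z₁ z₂ ≤ z₂ - z₁ := by
  unfold imageLength
  have : 0 ≤ z₂ := by linarith
  exact div_le_self (by linarith) (by nlinarith [mul_nonneg hr hz₁, mul_nonneg hr this])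

lemma imageLength_le_imageLength_of_le (hr : 0 ≤ r) (hz₁ : 0 ≤ z₁) (h₁₂ : z₁ ≤ z₂)
    (h₁₃ : z₁ ≤ z₃) (h₂₄ : z₂ ≤ z₄) (hlen : z₄ - z₃ ≤ z₂ - z₁) :
    imageLength r z₃ z₄ ≤ imageLength r z₁ z₂ := by
  have : 0 ≤ z₂ := by linarith
  unfold imageLength
  apply div_le_div₀ (by linarith) hlen (by positivity)
  exact mul_le_mul (by nlinarith) (by nlinarith) (by positivity) (by nlinarith)

lemma imageLength_le_imageLength_of_mul_le (hr₀ : 0 ≤ r) (hr₁ : r ≤ 1) (hz₁ : 0 ≤ z₁)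
    (h₁₂ : z₁ ≤ z₂) (h₁₃ : z₁ ≤ z₃) (h₂₄ : z₂ ≤ z₄)
    (h : (z₂ - z₁) * ((1 + z₃) * (1 + z₄)) ≤ (z₄ - z₃) * ((1 + z₁) * (1 + z₂))) :
    imageLength r z₁ z₂ ≤ imageLength r z₃ z₄ := by
  have hz₂ : 0 ≤ z₂ := by linarith
  have hz₃ : 0 ≤ z₃ := by linarith
  have hz₄ : 0 ≤ z₄ := by linarith
  unfold imageLength
  rw [div_le_div_iff₀ (by positivity) (by positivity)]
  -- the factor `(1 + r z)` grows more slowly in `z` than `1 + z` does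
  have e₃ : (1 + r * z₃) * (1 + z₁) ≤ (1 + z₃) * (1 + r * z₁) := by
    nlinarith [mul_nonneg (sub_nonneg.2 hr₁) (sub_nonneg.2 h₁₃)]
  have e₄ : (1 + r * z₄) * (1 + z₂) ≤ (1 + z₄) * (1 + r * z₂) := by
    nlinarith [mul_nonneg (sub_nonneg.2 hr₁) (sub_nonneg.2 h₂₄)]
  have e : (1 + r * z₃) * (1 + r * z₄) * ((1 + z₁) * (1 + z₂)) ≤
      (1 + z₃) * (1 + z₄) * ((1 + r * z₁) * (1 + r * z₂)) := by
    calc _ = ((1 + r * z₃) * (1 + z₁)) * ((1 + r * z₄) * (1 + z₂)) := by ring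
      _ ≤ ((1 + z₃) * (1 + r * z₁)) * ((1 + z₄) * (1 + r * z₂)) :=
        mul_le_mul e₃ e₄ (by positivity) (by positivity)
      _ = _ := by ring
  have hpos : 0 < (1 + z₁) * (1 + z₂) := by positivity
  refine le_of_mul_le_mul_right ?_ hpos
  calc (z₂ - z₁) * ((1 + r * z₃) * (1 + r * z₄)) * ((1 + z₁) * (1 + z₂))
      = (z₂ - z₁) * ((1 + r * z₃) * (1 + r * z₄) * ((1 + z₁) * (1 + z₂))) := by ring
    _ ≤ (z₂ - z₁) * ((1 + z₃) * (1 + z₄) * ((1 + r * z₁) * (1 + r * z₂))) :=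
      mul_le_mul_of_nonneg_left e (by linarith)
    _ = (z₂ - z₁) * ((1 + z₃) * (1 + z₄)) * ((1 + r * z₁) * (1 + r * z₂)) := by ring
    _ ≤ (z₄ - z₃) * ((1 + z₁) * (1 + z₂)) * ((1 + r * z₁) * (1 + r * z₂)) :=
      mul_le_mul_of_nonneg_right h (by positivity)
    _ = _ := by ring

end imageLength

section Continuants

/-- The continuants of `w`: `cfMap w z = (n₁ z + n₀) / (d₁ z + d₀)`. -/
structure Continuants where
  n₁ : ℕ
  n₀ : ℕ
  d₁ : ℕ
  d₀ : ℕ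

def continuants : List ℕ → Continuants
  | [] => ⟨1, 0, 0, 1⟩
  | a :: w =>
    let c := continuants w
    ⟨c.d₁, c.d₀, c.n₁ + a * c.d₁, c.n₀ + a * c.d₀⟩

variable {w : List ℕ}

lemma one_le_d₀ (hw : ∀ a ∈ w, 0 < a) : 1 ≤ (continuants w).d₀ := by
  induction w with
  | nil => rfl
  | cons a w ih =>
    have := ih fun b hb ↦ hw b (List.mem_cons_of_mem a hb)
    have := hw a List.mem_cons_self
    simp only [continuants]; nlinarith

lemma d₁_le_d₀ (hw : ∀ a ∈ w, 0 < a) : (continuants w).d₁ ≤ (continuants w).d₀ := by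
  suffices (continuants w).d₁ ≤ (continuants w).d₀ ∧
      (continuants w).n₁ + (continuants w).d₁ ≤ (continuants w).n₀ + (continuants w).d₀ from this.1
  induction w with
  | nil => simp [continuants]
  | cons a w ih =>
    obtain ⟨h₁, h₂⟩ := ih fun b hb ↦ hw b (List.mem_cons_of_mem a hb)
    have := hw a List.mem_cons_self
    simp only [continuants]
    constructor <;> nlinarith

lemma continuants_det (w : List ℕ) :
    ((continuants w).n₁ * (continuants w).d₀ - (continuants w).n₀ * (continuants w).d₁ : ℤ) =
      (-1) ^ w.length := by
  induction w with
  | nil => simp [continuants]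
  | cons a w ih =>
    simp only [continuants, List.length_cons, pow_succ]
    push_cast
    linear_combination -ih

lemma cfMap_eq (hw : ∀ a ∈ w, 0 < a) {z : ℝ} (hz : 0 ≤ z) :
    cfMap w z = ((continuants w).n₁ * z + (continuants w).n₀) /
      ((continuants w).d₁ * z + (continuants w).d₀) := by
  induction w with
  | nil => simp [cfMap, continuants]
  | cons a w ih =>
    have hw' : ∀ b ∈ w, 0 < b := fun b hb ↦ hw b (List.mem_cons_of_mem a hb)
    have hd : (1 : ℝ) ≤ (continuants w).d₀ := by exact_mod_cast one_le_d₀ hw'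
    have ha : (1 : ℝ) ≤ a := by exact_mod_cast hw a List.mem_cons_self
    simp only [cfMap, ih hw', cfStep, continuants]
    push_cast
    field_simp
    ring

lemma two_pow_le_d₀ : ∀ w : List ℕ, (∀ a ∈ w, 0 < a) → 2 ^ (w.length / 2) ≤ (continuants w).d₀
  | [], _ => le_rfl
  | [a], hw => by
    have := hw a (List.mem_singleton_self a)
    simp only [continuants, List.length_singleton]
    omega
  | a :: b :: w, hw => by
    have hw' : ∀ c ∈ w, 0 < c := fun c hc ↦ hw c (by simp [hc])
    have ih := two_pow_le_d₀ w hw'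
    have ha := hw a (by simp)
    have hb := hw b (by simp)
    -- `d₀(a b w) = d₀(w) + a d₀(b w) ≥ 2 d₀(w)`
    have : (continuants w).d₀ ≤ a * ((continuants w).n₀ + b * (continuants w).d₀) :=
      (Nat.le_mul_of_pos_left _ hb).trans
        ((Nat.le_add_left _ _).trans (Nat.le_mul_of_pos_left _ ha))
    simp only [continuants, List.length_cons, pow_succ,
      show (w.length + 1 + 1) / 2 = w.length / 2 + 1 by omega]
    omega

noncomputable def denRatio (w : List ℕ) : ℝ := (continuants w).d₁ / (continuants w).d₀

lemma denRatio_nonneg (w : List ℕ) : 0 ≤ denRatio w := by unfold denRatio; positivity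

lemma denRatio_le_one (hw : ∀ a ∈ w, 0 < a) : denRatio w ≤ 1 :=
  div_le_one_of_le₀ (by exact_mod_cast d₁_le_d₀ hw) (by positivity)

lemma cfMap_sub_cfMap (hw : ∀ a ∈ w, 0 < a) {z₁ z₂ : ℝ} (hz₁ : 0 ≤ z₁) (hz₂ : 0 ≤ z₂) :
    cfMap w z₂ - cfMap w z₁ =
      (-1) ^ w.length * imageLength (denRatio w) z₁ z₂ / ((continuants w).d₀ : ℝ) ^ 2 := by
  have hdet : ((continuants w).n₁ * (continuants w).d₀ - (continuants w).n₀ * (continuants w).d₁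
      : ℝ) = (-1) ^ w.length := by exact_mod_cast continuants_det w
  have hd : (1 : ℝ) ≤ (continuants w).d₀ := by exact_mod_cast one_le_d₀ hw
  rw [cfMap_eq hw hz₁, cfMap_eq hw hz₂, ← hdet, imageLength, denRatio]
  field_simp
  ring

lemma abs_cfMap_sub_cfMap (hw : ∀ a ∈ w, 0 < a) {z₁ z₂ : ℝ} (hz₁ : 0 ≤ z₁) (h : z₁ ≤ z₂) :
    |cfMap w z₂ - cfMap w z₁| = imageLength (denRatio w) z₁ z₂ / ((continuants w).d₀ : ℝ) ^ 2 := by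
  have : 0 ≤ z₂ := hz₁.trans h
  have := denRatio_nonneg w
  have hel : 0 ≤ imageLength (denRatio w) z₁ z₂ := div_nonneg (by linarith) (by positivity)
  rw [cfMap_sub_cfMap hw hz₁ (hz₁.trans h), abs_div, abs_mul, abs_pow, abs_neg, abs_one, one_pow,
    one_mul, abs_of_nonneg hel, abs_of_nonneg (by positivity : (0 : ℝ) ≤ _ ^ 2)]

lemma strictMonoOn_or_strictAntiOn_cfMap (hw : ∀ a ∈ w, 0 < a) :
    StrictMonoOn (cfMap w) (Ici 0) ∨ StrictAntiOn (cfMap w) (Ici 0) := by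
  have key : ∀ z₁ ∈ Ici (0 : ℝ), ∀ z₂ ∈ Ici (0 : ℝ), z₁ < z₂ →
      0 < (-1) ^ w.length * (cfMap w z₂ - cfMap w z₁) := by
    intro z₁ hz₁ z₂ hz₂ h
    rw [cfMap_sub_cfMap hw hz₁ hz₂, mul_div_assoc', ← mul_assoc, ← pow_add, ← two_mul, pow_mul,
      neg_one_sq, one_pow, one_mul]
    have := one_le_d₀ hw
    exact div_pos (imageLength_pos (denRatio_nonneg w) hz₁ h) (by positivity)
  rcases neg_one_pow_eq_or ℝ w.length with h | h
  · exact Or.inl fun z₁ hz₁ z₂ hz₂ hlt ↦ by have := key z₁ hz₁ z₂ hz₂ hlt; rw [h] at this; linarith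
  · exact Or.inr fun z₁ hz₁ z₂ hz₂ hlt ↦ by have := key z₁ hz₁ z₂ hz₂ hlt; rw [h] at this; linarith

lemma abs_cfMap_sub_le_abs_cfMap_sub (hw : ∀ a ∈ w, 0 < a) {u v u' v' : ℝ} (hu : 0 ≤ u)
    (huv : u ≤ v) (hu' : 0 ≤ u') (huv' : u' ≤ v')
    (h : ∀ r, 0 ≤ r → r ≤ 1 → imageLength r u v ≤ imageLength r u' v') :
    |cfMap w v - cfMap w u| ≤ |cfMap w v' - cfMap w u'| := by
  rw [abs_cfMap_sub_cfMap hw hu huv, abs_cfMap_sub_cfMap hw hu' huv']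
  exact div_le_div_of_nonneg_right (h _ (denRatio_nonneg w) (denRatio_le_one hw)) (sq_nonneg _)

lemma abs_cfMap_sub_le (hw : ∀ a ∈ w, 0 < a) {z₁ z₂ : ℝ} (hz₁ : 0 ≤ z₁) (h : z₁ ≤ z₂) :
    |cfMap w z₂ - cfMap w z₁| ≤ (z₂ - z₁) / ((2 : ℝ) ^ (w.length / 2)) ^ 2 := by
  rw [abs_cfMap_sub_cfMap hw hz₁ h]
  have : ((2 : ℝ) ^ (w.length / 2)) ≤ (continuants w).d₀ := by exact_mod_cast two_pow_le_d₀ w hw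
  exact div_le_div₀ (by linarith) (imageLength_le (denRatio_nonneg w) hz₁ h) (by positivity)
    (pow_le_pow_left₀ (by positivity) this 2)

lemma continuousOn_cfMap (hw : ∀ a ∈ w, 0 < a) : ContinuousOn (cfMap w) (Ici 0) := by
  have hd : (1 : ℝ) ≤ (continuants w).d₀ := by exact_mod_cast one_le_d₀ hw
  refine ContinuousOn.congr (f := fun z : ℝ ↦ ((continuants w).n₁ * z + (continuants w).n₀) /
      ((continuants w).d₁ * z + (continuants w).d₀)) ?_ fun z hz ↦ cfMap_eq hw hz
  refine ContinuousOn.div (by fun_prop) (by fun_prop) fun z hz ↦ ?_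
  have : (0 : ℝ) ≤ z := hz
  positivity

end Continuants

/-! ### The Cantor sets -/

lemma sqrt21_sq : √21 * √21 = 21 := Real.mul_self_sqrt (by norm_num)

lemma sqrt21_gt : 4.5825 < √21 := by nlinarith [sqrt21_sq, Real.sqrt_nonneg 21]

lemma sqrt21_lt : √21 < 4.5826 := by nlinarith [sqrt21_sq, Real.sqrt_nonneg 21]

/- `θ = [0; 1, 3, 1, 3, …]`, `α₀ = [0; 4, 1, 3, 1, 3, …]` and `α₁ = [0; 3, 1, 3, …]` are the largest
and smallest elements of the Cantor sets below; `pₐ = 1/(a + θ)` and `qₐ = 1/(a + α₀)` are the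
endpoints of the first-level cylinders. -/
noncomputable def θ : ℝ := (√21 - 3) / 2
noncomputable def α₀ : ℝ := (5 - √21) / 2
noncomputable def α₁ : ℝ := (√21 - 3) / 6
noncomputable def p₁ : ℝ := (√21 + 1) / 10
noncomputable def p₂ : ℝ := (√21 - 1) / 10
noncomputable def q₂ : ℝ := (9 + √21) / 30
noncomputable def q₃ : ℝ := (11 + √21) / 50
noncomputable def q₄ : ℝ := (13 + √21) / 74

lemma endpoints_lt : 0 < α₀ ∧ α₀ < q₄ ∧ q₄ < α₁ ∧ α₁ < q₃ ∧ q₃ < p₂ ∧ p₂ < q₂ ∧ q₂ < p₁ ∧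
    p₁ < θ ∧ θ < 1 := by
  have := sqrt21_gt; have := sqrt21_lt
  refine ⟨?_, ?_, ?_, ?_, ?_, ?_, ?_, ?_, ?_⟩ <;>
    simp only [θ, α₀, α₁, p₁, p₂, q₂, q₃, q₄] <;> linarith

lemma cfStep_eq_of_mul_eq_one {a : ℕ} {t x : ℝ} (h : x * (a + t) = 1) : cfStep a t = x :=
  (eq_one_div_of_mul_eq_one_left h).symm

lemma cfStep_one_θ : cfStep 1 θ = p₁ :=
  cfStep_eq_of_mul_eq_one (by simp only [θ, p₁]; push_cast; linear_combination sqrt21_sq / 20)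
lemma cfStep_two_θ : cfStep 2 θ = p₂ :=
  cfStep_eq_of_mul_eq_one (by simp only [θ, p₂]; push_cast; linear_combination sqrt21_sq / 20)
lemma cfStep_three_θ : cfStep 3 θ = α₁ :=
  cfStep_eq_of_mul_eq_one (by simp only [θ, α₁]; push_cast; linear_combination sqrt21_sq / 12)
lemma cfStep_four_θ : cfStep 4 θ = α₀ :=
  cfStep_eq_of_mul_eq_one (by simp only [θ, α₀]; push_cast; linear_combination -sqrt21_sq / 4)
lemma cfStep_one_α₁ : cfStep 1 α₁ = θ :=
  cfStep_eq_of_mul_eq_one (by simp only [θ, α₁]; push_cast; linear_combination sqrt21_sq / 12)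
lemma cfStep_two_α₀ : cfStep 2 α₀ = q₂ :=
  cfStep_eq_of_mul_eq_one (by simp only [q₂, α₀]; push_cast; linear_combination -sqrt21_sq / 60)
lemma cfStep_three_α₀ : cfStep 3 α₀ = q₃ :=
  cfStep_eq_of_mul_eq_one (by simp only [q₃, α₀]; push_cast; linear_combination -sqrt21_sq / 100)
lemma cfStep_four_α₀ : cfStep 4 α₀ = q₄ :=
  cfStep_eq_of_mul_eq_one (by simp only [q₄, α₀]; push_cast; linear_combination -sqrt21_sq / 148)

lemma cfStep_p₁ (a : ℕ) : cfStep a p₁ = 10 * (10 * a + 1 - √21) / ((10 * a + 1) ^ 2 - 21) := by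
  have : ((10 * a + 1) ^ 2 - 21 : ℝ) ≠ 0 := by
    rcases Nat.eq_zero_or_pos a with rfl | ha
    · norm_num
    · have : (1 : ℝ) ≤ a := by exact_mod_cast ha
      nlinarith
  refine cfStep_eq_of_mul_eq_one ?_
  rw [div_mul_eq_mul_div, div_eq_one_iff_eq this]
  simp only [p₁]; linear_combination -sqrt21_sq

lemma cfStep_q₂ (a : ℕ) : cfStep a q₂ = 30 * (30 * a + 9 - √21) / ((30 * a + 9) ^ 2 - 21) := by
  have : ((30 * a + 9) ^ 2 - 21 : ℝ) ≠ 0 := by nlinarith [(Nat.cast_nonneg a : (0 : ℝ) ≤ a)]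
  refine cfStep_eq_of_mul_eq_one ?_
  rw [div_mul_eq_mul_div, div_eq_one_iff_eq this]
  simp only [q₂]; linear_combination -sqrt21_sq

/-- The state `true` records that the previous digit was `1`; a `1` is never followed by a `4`. -/
def maxDigit : Bool → ℕ
  | false => 4
  | true => 3

def allowed (b : Bool) : Finset ℕ := Finset.Icc 1 (maxDigit b)

def nextState (a : ℕ) : Bool := a == 1

noncomputable def low (b : Bool) : ℝ := cfStep (maxDigit b) θ

lemma low_false : low false = α₀ := cfStep_four_θ

lemma low_true : low true = α₁ := cfStep_three_θ

lemma α₀_le_low (b : Bool) : α₀ ≤ low b := by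
  obtain ⟨-, h₁, h₂, -⟩ := endpoints_lt
  cases b
  · exact low_false.ge
  · rw [low_true]; linarith

lemma low_pos (b : Bool) : 0 < low b := endpoints_lt.1.trans_le (α₀_le_low b)

lemma pos_of_mem_allowed {a : ℕ} {b : Bool} (ha : a ∈ allowed b) : 0 < a :=
  (Finset.mem_Icc.1 ha).1

lemma cfStep_mem_Icc {a : ℕ} {b : Bool} (ha : a ∈ allowed b) {t : ℝ}
    (ht : t ∈ Icc (low (nextState a)) θ) : cfStep a t ∈ Icc (low b) θ := by
  obtain ⟨ha₁, haM⟩ := Finset.mem_Icc.1 ha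
  have ht₀ : 0 ≤ t := (low_pos _).le.trans ht.1
  refine ⟨cfStep_le_cfStep ha₁ haM ht₀ ht.2, ?_⟩
  rcases eq_or_lt_of_le ha₁ with rfl | ha₂
  · have : α₁ ≤ t := low_true ▸ ht.1
    calc cfStep 1 t ≤ cfStep 1 α₁ :=
          cfStep_le_cfStep one_pos le_rfl (low_true ▸ low_pos true).le this
      _ = θ := cfStep_one_α₁
  · obtain ⟨h₀, -, -, -, -, -, h₁, h₂, -⟩ := endpoints_lt
    have := cfStep_le_cfStep two_pos ha₂ h₀.le ((α₀_le_low _).trans ht.1)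
    rw [cfStep_two_α₀] at this
    linarith

/-- `approx n b` is the union of the cylinders of depth `n` of `cantor b`. -/
noncomputable def approx : ℕ → Bool → Set ℝ
  | 0, b => Icc (low b) θ
  | n + 1, b => ⋃ a ∈ allowed b, cfStep a '' approx n (nextState a)

/-- The numbers `[0; a₁, a₂, …]` with digits in `{1, …, 4}`, no `1` followed by a `4`, and
`a₁ ≠ 4` if `b`. -/
noncomputable def cantor (b : Bool) : Set ℝ := ⋂ n, approx n b

lemma approx_subset_Icc (n : ℕ) (b : Bool) : approx n b ⊆ Icc (low b) θ := by
  induction n generalizing b with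
  | zero => exact subset_rfl
  | succ n ih =>
    simp only [approx, iUnion_subset_iff, image_subset_iff]
    exact fun a ha t ht ↦ cfStep_mem_Icc ha (ih _ ht)

lemma approx_succ_subset (n : ℕ) (b : Bool) : approx (n + 1) b ⊆ approx n b := by
  induction n generalizing b with
  | zero => exact approx_subset_Icc 1 b
  | succ n ih =>
    simp only [approx] at ih ⊢
    exact biUnion_mono subset_rfl fun a _ ↦ image_mono (ih _)

lemma approx_antitone (b : Bool) : Antitone (approx · b) :=
  antitone_nat_of_succ_le fun n ↦ approx_succ_subset n b

lemma isCompact_approx (n : ℕ) (b : Bool) : IsCompact (approx n b) := by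
  induction n generalizing b with
  | zero => exact isCompact_Icc
  | succ n ih =>
    refine (allowed b).finite_toSet.isCompact_biUnion fun a ha ↦ (ih _).image_of_continuousOn ?_
    have : (0 : ℝ) < a := by exact_mod_cast pos_of_mem_allowed ha
    refine continuousOn_const.div (continuousOn_const.add continuousOn_id) fun _ ht ↦ ?_
    have := (low_pos _).trans_le (approx_subset_Icc n _ ht).1
    positivity

lemma cantor_subset_Ioo (b : Bool) : cantor b ⊆ Ioo 0 1 := fun _ ht ↦
  have h := approx_subset_Icc 0 b (mem_iInter.1 ht 0)
  ⟨(low_pos b).trans_le h.1, h.2.trans_lt endpoints_lt.2.2.2.2.2.2.2.2⟩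

lemma exists_cfStep_of_mem_cantor {b : Bool} {t : ℝ} (ht : t ∈ cantor b) :
    ∃ a ∈ allowed b, ∃ t' ∈ cantor (nextState a), t = cfStep a t' := by
  let s : allowed b → ℕ → Set ℝ := fun a n ↦ cfStep a '' approx n (nextState a)
  have hs : t ∈ ⋂ n, ⋃ a, s a n := mem_iInter.2 fun n ↦ by
    simpa [s, approx] using mem_iInter.1 ht (n + 1)
  rw [iInter_iUnion_of_antitone (s := s) fun a _ _ hmn ↦ image_mono (approx_antitone _ hmn)] at hs
  obtain ⟨⟨a, ha⟩, hat⟩ := mem_iUnion.1 hs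
  refine ⟨a, ha, 1 / t - a, mem_iInter.2 fun n ↦ ?_, by simp [cfStep]⟩
  obtain ⟨y, hy, rfl⟩ := mem_iInter.1 hat n
  simpa [cfStep] using hy

/-! ### NICF digits of points of the Cantor sets -/

lemma cfStep_lt_half {a : ℕ} (ha : 2 ≤ a) {t : ℝ} (ht : 0 < t) : cfStep a t < 1 / 2 := by
  have : (2 : ℝ) ≤ a := by exact_mod_cast ha
  exact one_div_lt_one_div_of_lt two_pos (by linarith)

lemma half_lt_cfStep_one {t : ℝ} (ht₀ : 0 ≤ t) (ht₁ : t < 1) : 1 / 2 < cfStep 1 t := by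
  unfold cfStep; push_cast
  exact one_div_lt_one_div_of_lt (by linarith) (by linarith)

lemma round_eq_of_abs_lt {k : ℤ} {ρ : ℝ} (hρ : |ρ| < 1 / 2) : round ((k : ℝ) + ρ) = k := by
  rw [round_intCast_add, add_eq_left, round_eq_zero_iff]
  exact ⟨by linarith [neg_abs_le ρ], (le_abs_self ρ).trans_lt hρ⟩

/-- The cylinder of the digit `1` lies to the right of `1/2`, those of the other digits to its
left. -/
lemma round_of_mem_cantor {b : Bool} {t : ℝ} (ht : t ∈ cantor b) :
    (round t = 0 ∨ round t = 1) ∧ |t - round t| < 1 / 2 := by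
  obtain ⟨a, ha, t', ht', rfl⟩ := exists_cfStep_of_mem_cantor ht
  obtain ⟨ht₀, ht₁⟩ := cantor_subset_Ioo _ ht
  obtain ⟨ht'₀, ht'₁⟩ := cantor_subset_Ioo _ ht'
  obtain rfl | ha₂ := (Finset.mem_Icc.1 ha).1.eq_or_lt
  · have h := half_lt_cfStep_one ht'₀.le ht'₁
    have : round (cfStep 1 t') = 1 :=
      round_eq_iff.2 ⟨by push_cast; linarith, by push_cast; linarith⟩
    rw [this, abs_of_neg (by push_cast; linarith)]
    exact ⟨Or.inr rfl, by push_cast; linarith⟩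
  · have h := cfStep_lt_half ha₂ ht'₀
    have : round (cfStep a t') = 0 := round_eq_zero_iff.2 ⟨by linarith, h⟩
    rw [this, Int.cast_zero, sub_zero, abs_of_pos ht₀]
    exact ⟨Or.inl rfl, h⟩

/-- This is where no `1` may be followed by a `4`. -/
lemma inv_abs_sub_round {b : Bool} {t : ℝ} (ht : t ∈ cantor b) :
    ∃ n : ℕ, n ≤ 4 ∧ ∃ b', ∃ t' ∈ cantor b', 1 / |t - round t| = n + t' := by
  obtain ⟨a, ha, t', ht', rfl⟩ := exists_cfStep_of_mem_cantor ht
  obtain ⟨ht'₀, ht'₁⟩ := cantor_subset_Ioo _ ht'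
  obtain ⟨ha₁, ha₄⟩ := Finset.mem_Icc.1 ha
  replace ha₄ : a ≤ 4 := by cases b <;> simp only [maxDigit] at ha₄ <;> omega
  rcases eq_or_lt_of_le ha₁ with rfl | ha₂
  · -- `1 - 1/(1 + 1/(a' + t'')) = 1/(1 + a' + t'')`
    obtain ⟨a', ha', t'', ht'', rfl⟩ := exists_cfStep_of_mem_cantor ht'
    obtain ⟨ha'₁, ha'₃⟩ := Finset.mem_Icc.1 ha'
    have ht''₀ := (cantor_subset_Ioo _ ht'').1
    have h := half_lt_cfStep_one ht'₀.le ht'₁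
    have hround : round (cfStep 1 (cfStep a' t'')) = 1 :=
      round_eq_iff.2 ⟨by push_cast; linarith, by push_cast; linarith [(cantor_subset_Ioo _ ht).2]⟩
    refine ⟨1 + a', by change a' ≤ 3 at ha'₃; omega, _, t'', ht'', ?_⟩
    have : (0 : ℝ) < a' := by exact_mod_cast ha'₁
    rw [hround, abs_of_neg (by push_cast; linarith [(cantor_subset_Ioo _ ht).2])]
    simp only [cfStep]
    field_simp
    push_cast
    ring
  · have h := cfStep_lt_half ha₂ ht'₀
    have := cfStep_pos (a := a) (by omega) ht'₀.le
    have : round (cfStep a t') = 0 := round_eq_zero_iff.2 ⟨by linarith, h⟩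
    refine ⟨a, ha₄, _, t', ht', ?_⟩
    rw [this, Int.cast_zero, sub_zero, abs_of_pos (cfStep_pos (by omega) ht'₀.le), cfStep,
      one_div_one_div]

/-- Satisfied by the NICF remainders `xᵢ - ⌊xᵢ⌉` of `k + t` for `t` in a Cantor set. -/
def IsRemainder (r : ℝ) : Prop := ∃ b, ∃ t ∈ cantor b, |r| = |t - round t|

lemma abs_round_le_and_isRemainder {x t : ℝ} {n : ℕ} {b : Bool} (hn : n ≤ 4) (ht : t ∈ cantor b)
    (hx : |x| = n + t) : |round x| ≤ 5 ∧ IsRemainder (x - round x) := by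
  obtain ⟨hround, hρ⟩ := round_of_mem_cantor ht
  obtain ⟨k, ρ, hxk, hk, hρk⟩ : ∃ k : ℤ, ∃ ρ : ℝ, x = k + ρ ∧ |k| = n + round t ∧
      |ρ| = |t - round t| := by
    have : (0 : ℤ) ≤ n + round t := by rcases hround with h | h <;> rw [h] <;> positivity
    rcases abs_choice x with h | h
    · exact ⟨n + round t, t - round t, by push_cast; linarith, abs_of_nonneg this, rfl⟩
    · exact ⟨-(n + round t), -(t - round t), by push_cast; linarith,
        by rw [abs_neg, abs_of_nonneg this], abs_neg _⟩
  rw [hxk, round_eq_of_abs_lt (hρk ▸ hρ)]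
  refine ⟨?_, b, t, ht, by rwa [add_sub_cancel_left]⟩
  rw [hk]
  rcases hround with h | h <;> rw [h] <;> omega

lemma IsRemainder.step {r : ℝ} (h : IsRemainder r) :
    |round (1 / r)| ≤ 5 ∧ IsRemainder (1 / r - round (1 / r)) := by
  obtain ⟨b, t, ht, hr⟩ := h
  obtain ⟨n, hn, b', t', ht', hinv⟩ := inv_abs_sub_round ht
  exact abs_round_le_and_isRemainder hn ht' (by rw [abs_one_div, hr, hinv])

theorem intCast_add_mem_NICFset (k : ℤ) {b : Bool} {t : ℝ} (ht : t ∈ cantor b) :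
    (k + t : ℝ) ∈ NICFset 5 := by
  have hrem : ∀ j, IsRemainder (nicfX (k + t) j - round (nicfX (k + t) j)) := by
    intro j
    induction j with
    | zero => exact ⟨b, t, ht, by simp [nicfX, round_intCast_add]⟩
    | succ j ih => exact ih.step.2
  intro i hi _
  obtain ⟨j, rfl⟩ : ∃ j, i = j + 1 := ⟨i - 1, by omega⟩
  exact (hrem j).step.1

/-! ### The tree of intervals of the Cantor set -/

def Admissible : Bool → List ℕ → Prop
  | _, [] => True
  | b, a :: w => a ∈ allowed b ∧ Admissible (nextState a) w

def finalState : Bool → List ℕ → Bool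
  | b, [] => b
  | _, a :: w => finalState (nextState a) w

lemma finalState_append (b : Bool) (w : List ℕ) (a : ℕ) :
    finalState b (w ++ [a]) = nextState a := by
  induction w generalizing b with
  | nil => rfl
  | cons c w ih => exact ih _

lemma Admissible.append {b : Bool} {w : List ℕ} {a : ℕ} (hw : Admissible b w)
    (ha : a ∈ allowed (finalState b w)) : Admissible b (w ++ [a]) := by
  induction w generalizing b with
  | nil => exact ⟨ha, trivial⟩
  | cons c w ih => exact ⟨hw.1, ih hw.2 ha⟩

lemma Admissible.pos {b : Bool} {w : List ℕ} (hw : Admissible b w) : ∀ a ∈ w, 0 < a := by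
  induction w generalizing b with
  | nil => simp
  | cons c w ih =>
    simp only [List.mem_cons, forall_eq_or_imp]
    exact ⟨pos_of_mem_allowed hw.1, ih hw.2⟩

lemma Admissible.image_subset_approx {b : Bool} {w : List ℕ} (hw : Admissible b w) :
    cfMap w '' Icc (low (finalState b w)) θ ⊆ approx w.length b := by
  induction w generalizing b with
  | nil => simp [cfMap, finalState, approx]
  | cons a w ih =>
    simp only [cfMap, approx, List.length_cons, image_subset_iff]
    intro t ht
    exact mem_biUnion hw.1 (mem_image_of_mem _ (ih hw.2 (mem_image_of_mem _ ht)))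

/-- Node `xₘ` (state `x = f`alse or `t`rue) is the hull of the cylinders of the digits
`m, …, maxDigit x` in the cylinder of a word; its gap separates the digit `m` from the digits
`m + 1, …`. The points `bL < gL < gH < bH` are its end points and those of its gap. -/
inductive Node
  | f1 | f2 | f3 | t1 | t2

namespace Node

def state : Node → Bool
  | f1 | f2 | f3 => false
  | t1 | t2 => true

def depth : Node → ℕ
  | f1 | t1 => 0
  | f2 | t2 => 1
  | f3 => 2

noncomputable def bL : Node → ℝ
  | f1 | f2 | f3 => α₀
  | t1 | t2 => α₁

noncomputable def gL : Node → ℝ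
  | f1 | t1 => q₂
  | f2 | t2 => q₃
  | f3 => q₄

noncomputable def gH : Node → ℝ
  | f1 | t1 => p₁
  | f2 | t2 => p₂
  | f3 => α₁

noncomputable def bH : Node → ℝ
  | f1 | t1 => θ
  | f2 | t2 => q₂
  | f3 => q₃

/-- The child covering `[bL, gL]` (`false`) or `[gH, bH]` (`true`): a node over the same word,
or the digit cylinder `.inr a`. -/
def child : Node → Bool → Node ⊕ ℕ
  | f1, false => .inl f2
  | f2, false => .inl f3
  | f3, false => .inr 4
  | t1, false => .inl t2
  | t2, false => .inr 3
  | f1, true => .inr 1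
  | f2, true => .inr 2
  | f3, true => .inr 3
  | t1, true => .inr 1
  | t2, true => .inr 2

def root (b : Bool) : Node := if b then t1 else f1

lemma state_root (b : Bool) : (root b).state = b := by cases b <;> rfl

lemma pts_lt (nd : Node) :
    0 < nd.bL ∧ nd.bL < nd.gL ∧ nd.gL < nd.gH ∧ nd.gH < nd.bH ∧ nd.bH ≤ θ := by
  obtain ⟨h₀, h₁, h₂, h₃, h₄, h₅, h₆, h₇, -⟩ := endpoints_lt
  cases nd <;> simp only [bL, gL, gH, bH] <;> refine ⟨?_, ?_, ?_, ?_, ?_⟩ <;> linarith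

lemma depth_le_two (nd : Node) : nd.depth ≤ 2 := by cases nd <;> simp [depth]

lemma bL_eq_low (nd : Node) : nd.bL = low nd.state := by
  cases nd
  all_goals first | exact low_false.symm | exact low_true.symm

lemma root_pts (b : Bool) :
    (root b).bL = low b ∧ (root b).gL = q₂ ∧ (root b).gH = p₁ ∧ (root b).bH = θ := by
  cases b <;> exact ⟨(bL_eq_low _).trans rfl, rfl, rfl, rfl⟩

end Node

/-- The end points and gap end points of a child, in the coordinates of its parent. -/
noncomputable def childPts : Node ⊕ ℕ → ℝ × ℝ × ℝ × ℝ
  | .inl nd => (nd.bL, nd.gL, nd.gH, nd.bH)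
  | .inr a => (cfStep a θ, cfStep a p₁, cfStep a q₂, cfStep a (low (nextState a)))

lemma childPts_child_false (nd : Node) :
    (childPts (nd.child false)).1 = nd.bL ∧ (childPts (nd.child false)).2.2.2 = nd.gL := by
  cases nd <;> simp [Node.child, childPts, Node.bL, Node.gL, Node.bH, nextState, low_false,
    cfStep_four_θ, cfStep_four_α₀, cfStep_three_θ, cfStep_three_α₀]

lemma childPts_child_true (nd : Node) :
    (childPts (nd.child true)).1 = nd.gH ∧ (childPts (nd.child true)).2.2.2 = nd.bH := by
  cases nd <;> simp [Node.child, childPts, Node.gH, Node.bH, nextState, low_false, low_true,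
    cfStep_one_θ, cfStep_one_α₁, cfStep_two_θ, cfStep_two_α₀, cfStep_three_θ, cfStep_three_α₀]

lemma Node.childPts_le (nd : Node) (i : Bool) :
    0 ≤ (childPts (nd.child i)).1 ∧ (childPts (nd.child i)).1 ≤ (childPts (nd.child i)).2.2.2 := by
  obtain ⟨h₀, h₁, h₂, h₃, -⟩ := nd.pts_lt
  cases i
  · obtain ⟨e₁, e₂⟩ := childPts_child_false nd
    rw [e₁, e₂]; exact ⟨h₀.le, h₁.le⟩
  · obtain ⟨e₁, e₂⟩ := childPts_child_true nd
    rw [e₁, e₂]; exact ⟨by linarith, h₃.le⟩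

/-- The thickness conditions in the five model configurations, uniformly in `r`. -/
lemma Node.imageLength_gap_le (nd : Node) (i : Bool) {r : ℝ} (hr₀ : 0 ≤ r) (hr₁ : r ≤ 1) :
    imageLength r nd.gL nd.gH ≤
        imageLength r (childPts (nd.child i)).1 (childPts (nd.child i)).2.2.2 ∧
      imageLength r (childPts (nd.child i)).2.1 (childPts (nd.child i)).2.2.1 ≤
        imageLength r nd.gL nd.gH := by
  have := sqrt21_gt; have := sqrt21_lt; have := sqrt21_sq
  cases nd <;> cases i <;>
    simp only [Node.child, childPts, Node.gL, Node.gH, Node.bL, Node.bH, nextState, Nat.reduceBEq,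
      low_false, low_true, cfStep_p₁, cfStep_q₂, cfStep_one_θ, cfStep_one_α₁, cfStep_two_θ,
      cfStep_two_α₀, cfStep_three_θ, cfStep_three_α₀, cfStep_four_θ, cfStep_four_α₀] <;>
    refine ⟨?_, ?_⟩ <;>
    first
    | (apply imageLength_le_imageLength_of_le hr₀ <;>
        (norm_num [θ, α₀, α₁, p₁, p₂, q₂, q₃, q₄]; linarith))
    | (apply imageLength_le_imageLength_of_mul_le hr₀ hr₁ <;>
        (norm_num [θ, α₀, α₁, p₁, p₂, q₂, q₃, q₄]; nlinarith))

def ChildOK (b : Bool) : Node ⊕ ℕ → Prop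
  | .inl nd => nd.state = b
  | .inr a => a ∈ allowed b

lemma childOK_child (nd : Node) (i : Bool) : ChildOK nd.state (nd.child i) := by
  cases nd <;> cases i <;> simp [ChildOK, Node.child, Node.state, allowed, maxDigit]

lemma childPts_gap {b : Bool} {c : Node ⊕ ℕ} (hc : ChildOK b c) :
    0 ≤ (childPts c).2.1 ∧ (childPts c).2.1 ≤ (childPts c).2.2.1 := by
  cases c with
  | inl nd => obtain ⟨h₀, h₁, h₂, -⟩ := nd.pts_lt; exact ⟨by simp only [childPts]; linarith, h₂.le⟩
  | inr a =>
    obtain ⟨h₀, h₁, h₂, h₃, h₄, h₅, h₆, -⟩ := endpoints_lt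
    have ha := pos_of_mem_allowed hc
    exact ⟨(cfStep_pos ha (by linarith)).le, cfStep_le_cfStep ha le_rfl (by linarith) h₆.le⟩

/-- Stands for the image of `node` under `cfMap word`, which reverses orientation when `word` has
odd length. -/
structure Piece where
  word : List ℕ
  node : Node
  admissible : Admissible false word
  finalState_eq : finalState false word = node.state

namespace Piece

variable (X : Piece)

noncomputable def lo : ℝ := min (cfMap X.word X.node.bL) (cfMap X.word X.node.bH)
noncomputable def hi : ℝ := max (cfMap X.word X.node.bL) (cfMap X.word X.node.bH)
noncomputable def gapLo : ℝ := min (cfMap X.word X.node.gL) (cfMap X.word X.node.gH)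
noncomputable def gapHi : ℝ := max (cfMap X.word X.node.gL) (cfMap X.word X.node.gH)

def rank : ℕ := 3 * X.word.length + X.node.depth

def ofChild : (c : Node ⊕ ℕ) → ChildOK X.node.state c → Piece
  | .inl nd, h => ⟨X.word, nd, X.admissible, X.finalState_eq.trans h.symm⟩
  | .inr a, h => ⟨X.word ++ [a], Node.root (nextState a), X.admissible.append (X.finalState_eq ▸ h),
      by rw [finalState_append, Node.state_root]⟩

def child (i : Bool) : Piece := X.ofChild (X.node.child i) (childOK_child _ _)

lemma ofChild_eq (c : Node ⊕ ℕ) (h : ChildOK X.node.state c) :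
    (X.ofChild c h).lo = min (cfMap X.word (childPts c).1) (cfMap X.word (childPts c).2.2.2) ∧
    (X.ofChild c h).hi = max (cfMap X.word (childPts c).1) (cfMap X.word (childPts c).2.2.2) ∧
    (X.ofChild c h).gapLo =
      min (cfMap X.word (childPts c).2.1) (cfMap X.word (childPts c).2.2.1) ∧
    (X.ofChild c h).gapHi =
      max (cfMap X.word (childPts c).2.1) (cfMap X.word (childPts c).2.2.1) := by
  cases c with
  | inl nd => exact ⟨rfl, rfl, rfl, rfl⟩
  | inr a =>
    obtain ⟨h₁, h₂, h₃, h₄⟩ := Node.root_pts (nextState a)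
    simp only [ofChild, lo, hi, gapLo, gapHi, cfMap_append, childPts, h₁, h₂, h₃, h₄]
    exact ⟨min_comm _ _, max_comm _ _, min_comm _ _, max_comm _ _⟩

lemma child_eq (i : Bool) :
    (X.child i).lo = min (cfMap X.word (childPts (X.node.child i)).1)
      (cfMap X.word (childPts (X.node.child i)).2.2.2) ∧
    (X.child i).hi = max (cfMap X.word (childPts (X.node.child i)).1)
      (cfMap X.word (childPts (X.node.child i)).2.2.2) ∧
    (X.child i).gapLo = min (cfMap X.word (childPts (X.node.child i)).2.1)
      (cfMap X.word (childPts (X.node.child i)).2.2.1) ∧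
    (X.child i).gapHi = max (cfMap X.word (childPts (X.node.child i)).2.1)
      (cfMap X.word (childPts (X.node.child i)).2.2.1) :=
  X.ofChild_eq _ _

lemma rank_lt_child (i : Bool) : X.rank < (X.child i).rank := by
  obtain ⟨w, nd, -, -⟩ := X
  cases nd <;> cases i <;>
    simp [rank, child, ofChild, Node.child, Node.depth, Node.root, nextState] <;> omega

lemma length_le : X.hi - X.lo ≤ (1 / 4) ^ (X.word.length / 2) := by
  obtain ⟨h₀, h₁, h₂, h₃, h₄⟩ := X.node.pts_lt
  have hθ := endpoints_lt.2.2.2.2.2.2.2.2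
  rw [hi, lo, max_sub_min_eq_abs]
  refine (abs_cfMap_sub_le X.admissible.pos h₀.le (by linarith)).trans ?_
  rw [← pow_mul, mul_comm, pow_mul, one_div_pow]
  norm_num only
  exact div_le_div_of_nonneg_right (by linarith) (by positivity)

lemma Icc_subset_approx : Icc X.lo X.hi ⊆ approx X.word.length false := by
  obtain ⟨h₀, h₁, h₂, h₃, h₄⟩ := X.node.pts_lt
  have hf := continuousOn_cfMap X.admissible.pos
  calc Icc X.lo X.hi = uIcc (cfMap X.word X.node.bL) (cfMap X.word X.node.bH) := rfl
    _ ⊆ cfMap X.word '' uIcc X.node.bL X.node.bH :=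
      intermediate_value_uIcc (hf.mono fun _ hz ↦ (le_inf h₀.le (by linarith)).trans hz.1)
    _ ⊆ cfMap X.word '' Icc (low (finalState false X.word)) θ := by
      rw [uIcc_of_le (by linarith), X.finalState_eq, ← Node.bL_eq_low]
      exact image_mono (Icc_subset_Icc_right (by linarith))
    _ ⊆ approx X.word.length false := X.admissible.image_subset_approx

lemma gapLo_lt_gapHi : X.gapLo < X.gapHi := by
  obtain ⟨h₀, h₁, h₂, -⟩ := X.node.pts_lt
  have hL : X.node.gL ∈ Ici (0 : ℝ) := by simp only [mem_Ici]; linarith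
  have hH : X.node.gH ∈ Ici (0 : ℝ) := by simp only [mem_Ici]; linarith
  refine min_lt_max.2 ?_
  rcases strictMonoOn_or_strictAntiOn_cfMap X.admissible.pos with hf | hf
  · exact (hf hL hH h₂).ne
  · exact (hf hL hH h₂).ne'

lemma exists_child_eq : ∃ i, (X.child i).lo = X.lo ∧ (X.child i).hi = X.gapLo ∧
    (X.child !i).lo = X.gapHi ∧ (X.child !i).hi = X.hi := by
  obtain ⟨h₀, h₁, h₂, h₃, -⟩ := X.node.pts_lt
  obtain ⟨lo₀, hi₀, -, -⟩ := X.child_eq false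
  obtain ⟨lo₁, hi₁, -, -⟩ := X.child_eq true
  obtain ⟨e₁, e₂⟩ := childPts_child_false X.node
  obtain ⟨e₃, e₄⟩ := childPts_child_true X.node
  rw [e₁, e₂] at lo₀ hi₀
  rw [e₃, e₄] at lo₁ hi₁
  have hbL : X.node.bL ∈ Ici (0 : ℝ) := h₀.le
  have hgL : X.node.gL ∈ Ici (0 : ℝ) := by simp only [mem_Ici]; linarith
  have hgH : X.node.gH ∈ Ici (0 : ℝ) := by simp only [mem_Ici]; linarith
  have hbH : X.node.bH ∈ Ici (0 : ℝ) := by simp only [mem_Ici]; linarith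
  rcases strictMonoOn_or_strictAntiOn_cfMap X.admissible.pos with hf | hf
  · refine ⟨false, ?_⟩
    simp only [Bool.not_false, lo₀, hi₀, lo₁, hi₁]
    exact min_max_eq_of_le (hf.monotoneOn hbL hgL h₁.le) (hf.monotoneOn hgL hgH h₂.le)
      (hf.monotoneOn hgH hbH h₃.le)
  · refine ⟨true, ?_⟩
    simp only [Bool.not_true, lo₀, hi₀, lo₁, hi₁]
    exact min_max_eq_of_ge (hf.antitoneOn hbL hgL h₁.le) (hf.antitoneOn hgL hgH h₂.le)
      (hf.antitoneOn hgH hbH h₃.le)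

lemma gap_le_length_child (i : Bool) : X.gapHi - X.gapLo ≤ (X.child i).hi - (X.child i).lo := by
  obtain ⟨h₀, h₁, h₂, -⟩ := X.node.pts_lt
  obtain ⟨hlo, hhi, -, -⟩ := X.child_eq i
  obtain ⟨hu₀, hu⟩ := X.node.childPts_le i
  rw [hlo, hhi, gapLo, gapHi, max_sub_min_eq_abs, max_sub_min_eq_abs]
  exact abs_cfMap_sub_le_abs_cfMap_sub X.admissible.pos (by linarith) h₂.le hu₀ hu
    fun r hr₀ hr₁ ↦ (X.node.imageLength_gap_le i hr₀ hr₁).1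

lemma gap_child_le (i : Bool) : (X.child i).gapHi - (X.child i).gapLo ≤ X.gapHi - X.gapLo := by
  obtain ⟨h₀, h₁, h₂, -⟩ := X.node.pts_lt
  obtain ⟨-, -, hlo, hhi⟩ := X.child_eq i
  obtain ⟨hu₀, hu⟩ := childPts_gap (childOK_child X.node i)
  rw [hlo, hhi, gapLo, gapHi, max_sub_min_eq_abs, max_sub_min_eq_abs]
  exact abs_cfMap_sub_le_abs_cfMap_sub X.admissible.pos hu₀ hu (by linarith) h₂.le
    fun r hr₀ hr₁ ↦ (X.node.imageLength_gap_le i hr₀ hr₁).2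

lemma le_length_of_le_rank {n : ℕ} (h : 3 * n ≤ X.rank) : n ≤ X.word.length := by
  have := X.node.depth_le_two
  unfold rank at h
  omega

lemma exists_length_lt (ε : ℝ) (hε : 0 < ε) : ∃ N, ∀ X : Piece, N ≤ X.rank → X.hi - X.lo < ε := by
  obtain ⟨K, hK⟩ := exists_pow_lt_of_lt_one hε (by norm_num : (1 / 4 : ℝ) < 1)
  refine ⟨3 * (2 * K), fun X hX ↦ X.length_le.trans_lt (lt_of_le_of_lt ?_ hK)⟩
  have := X.le_length_of_le_rank hX
  exact pow_le_pow_of_le_one (by norm_num) (by norm_num) (by omega)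

end Piece

noncomputable def pieceTree : ThickTree Piece where
  lo := Piece.lo
  hi := Piece.hi
  gapLo := Piece.gapLo
  gapHi := Piece.gapHi
  rank := Piece.rank
  child := Piece.child
  gapLo_lt_gapHi := Piece.gapLo_lt_gapHi
  exists_child_eq := Piece.exists_child_eq
  gap_le_length_child := Piece.gap_le_length_child
  gap_child_le := Piece.gap_child_le
  rank_lt_child := Piece.rank_lt_child
  exists_length_lt := Piece.exists_length_lt

def rootPiece : Piece := ⟨[], .f1, trivial, rfl⟩

lemma linked_rootPiece {s : ℝ} (hs : s ∈ Icc (2 * α₀) (2 * θ)) :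
    pieceTree.Linked pieceTree s rootPiece rootPiece := by
  obtain ⟨h₀, h₁, h₂, h₃, h₄, h₅, h₆, h₇, -⟩ := endpoints_lt
  have hlo : pieceTree.lo rootPiece = α₀ := show min α₀ θ = α₀ from min_eq_left (by linarith)
  have hhi : pieceTree.hi rootPiece = θ := show max α₀ θ = θ from max_eq_right (by linarith)
  have hgap : pieceTree.gap rootPiece = p₁ - q₂ := by
    simp only [ThickTree.gap, pieceTree, Piece.gapLo, Piece.gapHi, rootPiece, cfMap, Node.gL,
      Node.gH, max_sub_min_eq_abs, abs_of_pos (sub_pos.2 h₆)]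
  have hlen : p₁ - q₂ ≤ pieceTree.length rootPiece := by
    rw [ThickTree.length, hlo, hhi]
    simp only [p₁, q₂, θ, α₀]
    linarith [sqrt21_gt]
  exact ⟨by rw [hlo]; linarith [hs.1], by rw [hhi]; linarith [hs.2], hgap ▸ hlen, hgap ▸ hlen⟩

theorem Icc_subset_cantor_add_cantor : Icc (2 * α₀) (2 * θ) ⊆ cantor false + cantor false := by
  intro s hs
  refine mem_iInter_add_iInter (approx_antitone false) (approx_antitone false)
    (isCompact_approx · false) (isCompact_approx · false) fun n ↦ ?_
  obtain ⟨X, Y, hXY, hX, hY⟩ := (linked_rootPiece hs).exists_ranks_ge (3 * n)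
  refine add_subset_add
    (X.Icc_subset_approx.trans (approx_antitone false (X.le_length_of_le_rank hX)))
    (Y.Icc_subset_approx.trans (approx_antitone false (Y.le_length_of_le_rank hY)))
    (mem_Icc_add_Icc (pieceTree.lo_le_hi X) (pieceTree.lo_le_hi Y) ⟨hXY.1, hXY.2.1⟩)

lemma one_le_two_mul_θ_sub_two_mul_α₀ : 1 ≤ 2 * θ - 2 * α₀ := by
  simp only [θ, α₀]; linarith [sqrt21_gt]

end NICF

theorem nicf5_add_nicf5_eq_real (x : ℝ) :
    ∃ u v : ℝ, x = u + v ∧ u ∈ NICFset 5 ∧ v ∈ NICFset 5 := by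
  set k := ⌊x - 2 * NICF.α₀⌋
  have hk : x - k ∈ Set.Icc (2 * NICF.α₀) (2 * NICF.θ) :=
    ⟨by linarith [Int.floor_le (x - 2 * NICF.α₀)],
      by linarith [Int.lt_floor_add_one (x - 2 * NICF.α₀), NICF.one_le_two_mul_θ_sub_two_mul_α₀]⟩
  obtain ⟨t₁, ht₁, t₂, ht₂, hsum⟩ := NICF.Icc_subset_cantor_add_cantor hk
  refine ⟨k + t₁, t₂, by linarith, NICF.intCast_add_mem_NICFset k ht₁, ?_⟩
  simpa using NICF.intCast_add_mem_NICFset 0 ht₂
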